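/- arXiv:1708.09275 — 6 statements merged into one kernel-verified Lean document; each statement's English description precedes it below -/
import Mathlib

section
/- Let K be a field of characteristic 0 and let m ≥ 2 be an integer. For every formal power series φ(x) ∈ x^m + x^{m+1}K[[x]] (i.e., φ has zero coefficients in degrees < m, coefficient 1 in degree m), there exists a unique formal power series f(x) ∈ x + x^2K[[x]] (i.e., f has zero constant term and linear coefficient 1) satisfying φ(f(x)) = f(x^m) as formal power series. -/
/-- Composition `f(g(x))` of formal power series, intended for `g` with zero
constant coefficient (in which case the truncated sum below computes the
`n`-th coefficient of the substitution of `g` into `f`). -/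
noncomputable def PowerSeries.comp {K : Type*} [CommSemiring K] (f g : PowerSeries K) :
    PowerSeries K :=
  PowerSeries.mk fun n =>
    PowerSeries.coeff n
      (∑ k ∈ Finset.range (n + 1), PowerSeries.C (PowerSeries.coeff k f) * g ^ k)

/-!
Write `φ ≡ X^m` and `f ≡ X` modulo higher powers of `X`. If `f` and `g` agree below degree
`j ≥ 2`, then the coefficients of degree `j + m - 1` of `φ ∘ f` and `φ ∘ g` differ by exactly
`m (f_j - g_j)` (only the term `X^m` of `φ` contributes), while those of `f(X^m)` and `g(X^m)`
coincide since `j + m - 1 < m j`. So the coefficient of degree `j + m - 1` of the equation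
determines `f_j` from the lower coefficients: this gives uniqueness by induction on `j`, and
existence by taking this recursion as the definition of `f_j`. The coefficients of degree `≤ m`
of the equation hold for every `f ∈ X + X²K[[X]]`.
-/

open Finset PowerSeries

namespace PowerSeries

variable {R : Type*} [CommRing R]

theorem coeff_comp (φ g : R⟦X⟧) (n : ℕ) :
    coeff n (φ.comp g) = ∑ k ∈ range (n + 1), coeff k φ * coeff n (g ^ k) := by
  simp [comp, map_sum, coeff_C_mul]

theorem sub_comp (f g h : R⟦X⟧) : (f - g).comp h = f.comp h - g.comp h := by
  ext n
  simp only [coeff_comp, map_sub, sub_mul, sum_sub_distrib]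

theorem coeff_comp_sub_comp (φ f g : R⟦X⟧) (n : ℕ) :
    coeff n (φ.comp f - φ.comp g) =
      ∑ k ∈ range (n + 1), coeff k φ * coeff n (f ^ k - g ^ k) := by
  simp only [map_sub, coeff_comp, mul_sub, sum_sub_distrib]

theorem X_pow_comp {h : R⟦X⟧} (hh : X ∣ h) (k : ℕ) : (X ^ k : R⟦X⟧).comp h = h ^ k := by
  ext n
  rw [coeff_comp, sum_eq_single k (fun i _ hik => by simp [coeff_X_pow, hik])]
  · simp
  · intro hk
    have hnk : n < k := by simpa using hk
    simp [X_pow_dvd_iff.1 (pow_dvd_pow_of_dvd hh k) n hnk]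

theorem X_comp {h : R⟦X⟧} (hh : X ∣ h) : (X : R⟦X⟧).comp h = h := by
  simpa using X_pow_comp hh 1

theorem X_pow_mul_dvd_comp {f h : R⟦X⟧} {j d : ℕ} (hf : X ^ j ∣ f) (hh : X ^ d ∣ h) :
    X ^ (d * j) ∣ f.comp h := by
  refine X_pow_dvd_iff.2 fun n hn => (coeff_comp f h n).trans (sum_eq_zero fun k _ => ?_)
  rcases lt_or_ge k j with hkj | hjk
  · rw [X_pow_dvd_iff.1 hf k hkj, zero_mul]
  · have hhk : X ^ (d * k) ∣ h ^ k := by rw [pow_mul]; exact pow_dvd_pow_of_dvd hh k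
    rw [X_pow_dvd_iff.1 hhk n (hn.trans_le (Nat.mul_le_mul_left d hjk)), mul_zero]

theorem coeff_add_mul_of_X_pow_dvd {u v : R⟦X⟧} {a b : ℕ} (hu : X ^ a ∣ u) (hv : X ^ b ∣ v) :
    coeff (a + b) (u * v) = coeff a u * coeff b v := by
  obtain ⟨u, rfl⟩ := hu
  obtain ⟨v, rfl⟩ := hv
  rw [mul_mul_mul_comm, ← pow_add]
  simp [coeff_X_pow_mul']

theorem X_pow_dvd_pow_sub_pow {f g : R⟦X⟧} {j : ℕ} (hf : X ∣ f) (hg : X ∣ g)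
    (hfg : X ^ j ∣ f - g) (k : ℕ) : X ^ (j + k) ∣ f ^ (k + 1) - g ^ (k + 1) := by
  induction k with
  | zero => simpa using hfg
  | succ k ih =>
    have hsplit : f ^ (k + 1 + 1) - g ^ (k + 1 + 1) =
        f * (f ^ (k + 1) - g ^ (k + 1)) + (f - g) * g ^ (k + 1) := by ring
    rw [hsplit]
    refine dvd_add ?_ ?_
    · rw [← add_assoc, pow_succ']
      exact mul_dvd_mul hf ih
    · rw [pow_add]
      exact mul_dvd_mul hfg (pow_dvd_pow_of_dvd hg _)

theorem coeff_pow_of_X_dvd {g : R⟦X⟧} (hg : X ∣ g) (k : ℕ) :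
    coeff k (g ^ k) = coeff 1 g ^ k := by
  induction k with
  | zero => simp
  | succ k ih =>
    rw [pow_succ, pow_succ,
      coeff_add_mul_of_X_pow_dvd (pow_dvd_pow_of_dvd hg k) (by rwa [pow_one]), ih]

theorem coeff_pow_sub_pow {f g : R⟦X⟧} {j : ℕ} (hf : X ∣ f) (hg : X ∣ g)
    (h1 : coeff 1 f = coeff 1 g) (hfg : X ^ j ∣ f - g) (k : ℕ) :
    coeff (j + k) (f ^ (k + 1) - g ^ (k + 1)) = (k + 1) * coeff 1 f ^ k * coeff j (f - g) := by
  induction k with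
  | zero => simp
  | succ k ih =>
    have hsplit : f ^ (k + 1 + 1) - g ^ (k + 1 + 1) =
        f * (f ^ (k + 1) - g ^ (k + 1)) + (f - g) * g ^ (k + 1) := by ring
    have hD : coeff (1 + (j + k)) (f * (f ^ (k + 1) - g ^ (k + 1))) =
        coeff 1 f * coeff (j + k) (f ^ (k + 1) - g ^ (k + 1)) :=
      coeff_add_mul_of_X_pow_dvd (by rwa [pow_one]) (X_pow_dvd_pow_sub_pow hf hg hfg k)
    have hE : coeff (j + (k + 1)) ((f - g) * g ^ (k + 1)) =
        coeff j (f - g) * coeff 1 g ^ (k + 1) := by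
      rw [coeff_add_mul_of_X_pow_dvd hfg (pow_dvd_pow_of_dvd hg _), coeff_pow_of_X_dvd hg]
    rw [hsplit, map_add, hE, show j + (k + 1) = 1 + (j + k) by omega, hD, ih, ← h1]
    push_cast
    ring

theorem X_pow_dvd_comp_sub_comp {ψ f g : R⟦X⟧} {a j : ℕ} (hψ : X ^ (a + 1) ∣ ψ) (hf : X ∣ f)
    (hg : X ∣ g) (hfg : X ^ j ∣ f - g) : X ^ (j + a) ∣ ψ.comp f - ψ.comp g := by
  refine X_pow_dvd_iff.2 fun n hn =>
    (coeff_comp_sub_comp ψ f g n).trans (sum_eq_zero fun k _ => ?_)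
  rcases Nat.lt_or_ge a k with hak | hka
  · obtain ⟨k, rfl⟩ := Nat.exists_eq_add_one_of_ne_zero (Nat.ne_zero_of_lt hak)
    rw [X_pow_dvd_iff.1 (X_pow_dvd_pow_sub_pow hf hg hfg k) n (by omega), mul_zero]
  · rw [X_pow_dvd_iff.1 hψ k (by omega), zero_mul]

theorem X_pow_succ_dvd_of_coeff_eq_zero {u : R⟦X⟧} {n : ℕ} (hu : X ^ n ∣ u)
    (hn : coeff n u = 0) : X ^ (n + 1) ∣ u :=
  X_pow_dvd_iff.2 fun i hi => (Nat.lt_succ_iff_lt_or_eq.1 hi).elim (X_pow_dvd_iff.1 hu i) (· ▸ hn)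

theorem X_pow_dvd_sub_trunc (f : R⟦X⟧) (n : ℕ) : X ^ n ∣ f - (trunc n f : R⟦X⟧) :=
  X_pow_dvd_iff.2 fun i hi => by rw [map_sub, coeff_coe_trunc_of_lt hi, sub_self]

theorem X_pow_succ_dvd_sub_X_pow_iff {φ : R⟦X⟧} {m : ℕ} :
    X ^ (m + 1) ∣ φ - X ^ m ↔ (∀ k < m, coeff k φ = 0) ∧ coeff m φ = 1 := by
  simp only [X_pow_dvd_iff, map_sub, coeff_X_pow, Nat.lt_succ_iff_lt_or_eq, or_imp, forall_and,
    forall_eq, if_pos, sub_eq_zero]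
  refine and_congr (forall₂_congr fun k hk => by rw [if_neg hk.ne]) Iff.rfl

section Bottcher

variable {m j : ℕ} {φ f g : R⟦X⟧}

theorem X_sq_dvd_sub_X (hf : X ∣ f) (hf1 : coeff 1 f = 1) : X ^ 2 ∣ f - X := by
  simpa using (X_pow_succ_dvd_sub_X_pow_iff (m := 1)).2 ⟨by simpa [X_dvd_iff] using hf, hf1⟩

theorem X_pow_succ_dvd_comp_sub_comp_X_pow (hm : 0 < m) (hφ : X ^ (m + 1) ∣ φ - X ^ m)
    (hf : X ∣ f) (hf1 : coeff 1 f = 1) : X ^ (m + 1) ∣ φ.comp f - f.comp (X ^ m) := by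
  obtain ⟨k, rfl⟩ := Nat.exists_eq_add_one_of_ne_zero hm.ne'
  have hX : (X : R⟦X⟧) ∣ X := dvd_rfl
  have hsplit : φ.comp f - f.comp (X ^ (k + 1)) =
      (φ - X ^ (k + 1)).comp f + (f ^ (k + 1) - X ^ (k + 1)) - (f - X).comp (X ^ (k + 1)) := by
    rw [sub_comp, sub_comp, X_pow_comp hf, X_comp (dvd_pow_self X (by omega : k + 1 ≠ 0))]
    ring
  rw [hsplit]
  refine dvd_sub (dvd_add ?_ ?_) ?_
  · simpa only [one_mul] using X_pow_mul_dvd_comp (d := 1) hφ (by rwa [pow_one])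
  · rw [show k + 1 + 1 = 2 + k by omega]
    exact X_pow_dvd_pow_sub_pow hf hX (X_sq_dvd_sub_X hf hf1) k
  · exact (pow_dvd_pow X (by omega)).trans (X_pow_mul_dvd_comp (X_sq_dvd_sub_X hf hf1) dvd_rfl)

theorem coeff_comp_sub_comp_of_X_pow_dvd (hm : 0 < m) (hφ : X ^ (m + 1) ∣ φ - X ^ m)
    (hf : X ∣ f) (hg : X ∣ g) (hf1 : coeff 1 f = 1) (hg1 : coeff 1 g = 1)
    (hfg : X ^ j ∣ f - g) :
    coeff (j + (m - 1)) (φ.comp f - φ.comp g) = m * coeff j (f - g) := by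
  obtain ⟨k, rfl⟩ := Nat.exists_eq_add_one_of_ne_zero hm.ne'
  have hsplit : φ.comp f - φ.comp g =
      ((φ - X ^ (k + 1)).comp f - (φ - X ^ (k + 1)).comp g) + (f ^ (k + 1) - g ^ (k + 1)) := by
    rw [sub_comp, sub_comp, X_pow_comp hf, X_pow_comp hg]
    ring
  rw [Nat.add_sub_cancel, hsplit, map_add,
    X_pow_dvd_iff.1 (X_pow_dvd_comp_sub_comp hφ hf hg hfg) _ (by omega), zero_add,
    coeff_pow_sub_pow hf hg (hf1.trans hg1.symm) hfg, hf1, one_pow, mul_one]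
  push_cast
  ring

theorem coeff_comp_sub_comp_X_pow_eq_add (hm : 2 ≤ m) (hφ : X ^ (m + 1) ∣ φ - X ^ m)
    (hf : X ∣ f) (hg : X ∣ g) (hf1 : coeff 1 f = 1) (hg1 : coeff 1 g = 1) (hj : 2 ≤ j)
    (hfg : X ^ j ∣ f - g) :
    coeff (j + (m - 1)) (φ.comp f - f.comp (X ^ m)) =
      coeff (j + (m - 1)) (φ.comp g - g.comp (X ^ m)) + m * coeff j (f - g) := by
  have hlt : j + (m - 1) < m * j := by
    obtain ⟨a, rfl⟩ := Nat.exists_eq_add_of_le' hm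
    obtain ⟨b, rfl⟩ := Nat.exists_eq_add_of_le' hj
    rw [Nat.add_sub_assoc (by omega)]
    nlinarith
  have hcomp := X_pow_dvd_iff.1 (X_pow_mul_dvd_comp hfg (dvd_refl (X ^ m))) _ hlt
  have hφcomp := coeff_comp_sub_comp_of_X_pow_dvd (by omega) hφ hf hg hf1 hg1 hfg
  simp only [sub_comp, map_sub] at hcomp hφcomp ⊢
  linear_combination hφcomp - hcomp

end Bottcher

section Field

variable {K : Type*} [Field K] {m : ℕ} {φ f g : K⟦X⟧}

noncomputable def bottcherCoeff (φ : K⟦X⟧) (m : ℕ) : ℕ → K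
  | 0 => 0
  | 1 => 1
  | j + 2 =>
    -- This value cancels the coefficient of degree `j + 2 + (m - 1)` of `φ ∘ f - f(X^m)`,
    -- see `coeff_comp_sub_comp_X_pow_eq_add`.
    let F : K⟦X⟧ := mk fun i => if _ : i < j + 2 then bottcherCoeff φ m i else 0
    (m : K)⁻¹ * coeff (j + 2 + (m - 1)) (F.comp (X ^ m) - φ.comp F)

noncomputable def bottcher (φ : K⟦X⟧) (m : ℕ) : K⟦X⟧ :=
  mk (bottcherCoeff φ m)

theorem X_dvd_bottcher : X ∣ bottcher φ m :=
  X_dvd_iff.2 (by simp [bottcher, bottcherCoeff])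

theorem coeff_one_bottcher : coeff 1 (bottcher φ m) = 1 := by
  simp [bottcher, bottcherCoeff]

theorem coeff_bottcher_add_two (j : ℕ) :
    coeff (j + 2) (bottcher φ m) =
      (m : K)⁻¹ * coeff (j + 2 + (m - 1))
        ((trunc (j + 2) (bottcher φ m) : K⟦X⟧).comp (X ^ m) -
          φ.comp (trunc (j + 2) (bottcher φ m))) := by
  rw [bottcher, coeff_mk, bottcherCoeff]
  congr 4 <;> ext i <;> simp [coeff_trunc]

theorem eq_of_comp_eq_comp_X_pow (hm : 2 ≤ m) (hm0 : (m : K) ≠ 0)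
    (hφ : X ^ (m + 1) ∣ φ - X ^ m) (hf : X ∣ f) (hg : X ∣ g) (hf1 : coeff 1 f = 1)
    (hg1 : coeff 1 g = 1) (hfφ : φ.comp f = f.comp (X ^ m)) (hgφ : φ.comp g = g.comp (X ^ m)) :
    f = g := by
  have hdvd : ∀ j, X ^ (j + 2) ∣ f - g := by
    intro j
    induction j with
    | zero => simpa using dvd_sub (X_sq_dvd_sub_X hf hf1) (X_sq_dvd_sub_X hg hg1)
    | succ j ih =>
      have hj := coeff_comp_sub_comp_X_pow_eq_add hm hφ hf hg hf1 hg1 (by omega) ih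
      rw [sub_eq_zero.2 hfφ, sub_eq_zero.2 hgφ, map_zero, zero_add, eq_comm, mul_eq_zero] at hj
      exact X_pow_succ_dvd_of_coeff_eq_zero ih (hj.resolve_left hm0)
  exact sub_eq_zero.1 <| ext fun n => X_pow_dvd_iff.1 (hdvd n) n (by omega)

theorem comp_bottcher (hm : 2 ≤ m) (hm0 : (m : K) ≠ 0) (hφ : X ^ (m + 1) ∣ φ - X ^ m) :
    φ.comp (bottcher φ m) = (bottcher φ m).comp (X ^ m) := by
  rw [← sub_eq_zero]
  ext n
  rcases le_or_gt n m with hn | hn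
  · exact X_pow_dvd_iff.1 (X_pow_succ_dvd_comp_sub_comp_X_pow (by omega) hφ X_dvd_bottcher
      coeff_one_bottcher) n (by omega)
  obtain ⟨j, rfl⟩ : ∃ j, n = j + 2 + (m - 1) := ⟨n - m - 1, by omega⟩
  have hrec := coeff_bottcher_add_two (φ := φ) (m := m) j
  set f := bottcher φ m
  set F : K⟦X⟧ := ↑(trunc (j + 2) f)
  have hfF : X ^ (j + 2) ∣ f - F := X_pow_dvd_sub_trunc f (j + 2)
  have hF : X ∣ F := (dvd_sub_right X_dvd_bottcher).1 ((dvd_pow_self X (by omega)).trans hfF)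
  have hF1 : coeff 1 F = 1 := by rw [coeff_coe_trunc_of_lt (by omega), coeff_one_bottcher]
  have hFj : coeff (j + 2) F = 0 := by simp [F, coeff_trunc]
  rw [coeff_comp_sub_comp_X_pow_eq_add hm hφ X_dvd_bottcher hF coeff_one_bottcher hF1 (by omega)
    hfF, map_sub (coeff (j + 2)), hFj, sub_zero, hrec, mul_inv_cancel_left₀ hm0, ← map_add,
    sub_add_sub_cancel', sub_self]

end Field

end PowerSeries

/-- Existence and uniqueness of the Böttcher coordinate:
for `φ ∈ x^m + x^{m+1}K[[x]]` there is a unique `f ∈ x + x^2K[[x]]`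
with `φ(f(x)) = f(x^m)`. -/
theorem bottcher_exists_unique {K : Type*} [Field K] [CharZero K] (m : ℕ) (hm : 2 ≤ m)
    (φ : PowerSeries K) (hφlow : ∀ k < m, PowerSeries.coeff k φ = 0)
    (hφlead : PowerSeries.coeff m φ = 1) :
    ∃! f : PowerSeries K,
      PowerSeries.coeff 0 f = 0 ∧ PowerSeries.coeff 1 f = 1 ∧
        φ.comp f = f.comp (PowerSeries.X ^ m) := by
  have hm0 : (m : K) ≠ 0 := Nat.cast_ne_zero.2 (by omega)
  have hφ : X ^ (m + 1) ∣ φ - X ^ m := X_pow_succ_dvd_sub_X_pow_iff.2 ⟨hφlow, hφlead⟩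
  refine ⟨bottcher φ m, ⟨?_, coeff_one_bottcher, comp_bottcher hm hm0 hφ⟩, ?_⟩
  · simpa using X_dvd_iff.1 X_dvd_bottcher
  · rintro g ⟨hg0, hg1, hgφ⟩
    exact eq_of_comp_eq_comp_X_pow hm hm0 hφ (X_dvd_iff.2 (by simpa using hg0)) X_dvd_bottcher
      hg1 coeff_one_bottcher hgφ (comp_bottcher hm hm0 hφ)
end

section
/- Let R be a commutative ring of characteristic 0 with fraction field K, let m ≥ 2 be an integer, and let φ(x) = x^m · Σ_{k≥0} b_k x^k ∈ R[[x]] with b_0 = 1 and all b_k ∈ R. Then the Böttcher coordinate f_φ(x) and its compositional inverse f_φ^{-1}(x) are both of the form x · Σ_{k≥0} (a_k/(m^k · k!)) x^k with a_0 = 1 and a_k ∈ R for all k. -/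
/-!
Write `f = X u` and `φ = X^m B` with `B(0) = 1`. The Böttcher equation becomes
`u(X^m) = u^m B(X u)`. Taking logarithmic derivatives and multiplying by `X` gives, for
`W = X u'/u` and `c = B'/B ∈ R⟦X⟧`,
`m W(X^m) = m W + X u c(X u) (1 + W)`.
Comparing coefficients of `X^n`, the division by `m` is paid for by the shift coming from the
factor `X`, and induction gives `m^n (n-1)! W_n ∈ R`; then `n u_n = ∑ W_k u_{n-k}` turns this
into `m^n n! u_n ∈ R`. For the inverse `g = X v` one has `g ∘ φ = g^m`, i.e. `B v(φ) = v^m`,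
and the same argument applies to `W = X v'/v`, which satisfies
`m W = W(φ) (m + X c) + X c`; the `n`-th coefficient of `W(φ)` only involves `W_k` with
`2k ≤ n`.
-/

open PowerSeries Finset

namespace Subring

variable {K : Type*} [CommRing K] (S : Subring K) (m : ℕ)

def denomDvd (a b : ℕ) : AddSubgroup K :=
  S.toAddSubgroup.comap (AddMonoidHom.mulLeft ((m : K) ^ a * b.factorial))

variable {S m} {a b a' b' : ℕ} {x y : K}

theorem mem_denomDvd : x ∈ S.denomDvd m a b ↔ (m : K) ^ a * b.factorial * x ∈ S := Iff.rfl

theorem mem_denomDvd_of_mem (hx : x ∈ S) : x ∈ S.denomDvd m a b :=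
  mul_mem (mul_mem (pow_mem (natCast_mem S m) a) (natCast_mem S _)) hx

theorem denomDvd_mono (ha : a ≤ a') (hb : b ≤ b') : S.denomDvd m a b ≤ S.denomDvd m a' b' := by
  intro x hx
  obtain ⟨N, hN⟩ := Nat.factorial_dvd_factorial hb
  have : (m : K) ^ a' * b'.factorial * x
      = (m : K) ^ (a' - a) * N * ((m : K) ^ a * b.factorial * x) := by
    rw [hN, ← pow_sub_mul_pow (m : K) ha]
    push_cast
    ring
  rw [mem_denomDvd, this]
  exact mul_mem (mul_mem (pow_mem (natCast_mem S m) _) (natCast_mem S N)) hx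

theorem mul_mem_denomDvd (hx : x ∈ S.denomDvd m a b) (hy : y ∈ S.denomDvd m a' b') :
    x * y ∈ S.denomDvd m (a + a') (b + b') := by
  obtain ⟨N, hN⟩ := Nat.factorial_mul_factorial_dvd_factorial_add b b'
  have : (m : K) ^ (a + a') * (b + b').factorial * (x * y)
      = N * (((m : K) ^ a * b.factorial * x) * ((m : K) ^ a' * b'.factorial * y)) := by
    rw [hN]
    push_cast
    ring
  rw [mem_denomDvd, this]
  exact mul_mem (natCast_mem S N) (mul_mem hx hy)

theorem mul_mem_denomDvd_of_mem_left (hx : x ∈ S) (hy : y ∈ S.denomDvd m a b) :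
    x * y ∈ S.denomDvd m a b := by
  rw [mem_denomDvd, mul_left_comm]
  exact mul_mem hx hy

theorem mem_denomDvd_succ_left (h : (m : K) * x ∈ S.denomDvd m a b) :
    x ∈ S.denomDvd m (a + 1) b := by
  rw [mem_denomDvd] at h ⊢
  convert h using 1
  ring

theorem mem_denomDvd_succ_right (h : ((b : K) + 1) * x ∈ S.denomDvd m a b) :
    x ∈ S.denomDvd m a (b + 1) := by
  rw [mem_denomDvd] at h ⊢
  convert h using 1
  push_cast [Nat.factorial_succ]
  ring

end Subring

namespace PowerSeries

section CommRing

variable {R : Type*} [CommRing R]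

theorem constantCoeff_map {S : Type*} [CommRing S] (ρ : R →+* S) (A : R⟦X⟧) :
    constantCoeff (A.map ρ) = ρ (constantCoeff A) :=
  MvPowerSeries.constantCoeff_map ρ A

theorem coeff_pow_eq_zero_of_lt {g : R⟦X⟧} (hg : constantCoeff g = 0) {n k : ℕ} (h : n < k) :
    coeff n (g ^ k) = 0 :=
  X_pow_dvd_iff.mp (pow_dvd_pow_of_dvd (X_dvd_iff.mpr hg) k) n h

theorem coeff_subst_eq_sum {g : R⟦X⟧} (hg : constantCoeff g = 0) (A : R⟦X⟧) (n : ℕ) :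
    coeff n (A.subst g) = ∑ k ∈ range (n + 1), coeff k A * coeff n (g ^ k) := by
  rw [coeff_subst' (HasSubst.of_constantCoeff_zero' hg)]
  refine finsum_eq_sum_of_support_subset _ fun k hk => ?_
  by_contra hkn
  simp only [mem_coe, mem_range, not_lt] at hkn
  exact hk (by simp only [smul_eq_mul, coeff_pow_eq_zero_of_lt hg (by omega : n < k), mul_zero])

theorem constantCoeff_subst_of_constantCoeff_eq_zero {g : R⟦X⟧} (hg : constantCoeff g = 0)
    (A : R⟦X⟧) : constantCoeff (A.subst g) = constantCoeff A := by
  simpa using coeff_subst_eq_sum hg A 0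

theorem comp_eq_subst {g : R⟦X⟧} (hg : constantCoeff g = 0) (A : R⟦X⟧) :
    A.comp g = A.subst g := by
  ext n
  simp [PowerSeries.comp, coeff_subst_eq_sum hg, coeff_C_mul]

theorem subst_X_mul {A g : R⟦X⟧} (hg : constantCoeff g = 0) :
    (X * A).subst g = g * A.subst g := by
  rw [subst_mul (HasSubst.of_constantCoeff_zero' hg), subst_X (HasSubst.of_constantCoeff_zero' hg)]

theorem subst_eq_X_of_subst_eq_X {f g : R⟦X⟧} (hg0 : constantCoeff g = 0)
    (hg1 : IsUnit (coeff 1 g)) (h : f.subst g = X) : g.subst f = X := by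
  set Q := g.substInvOfIsUnit hg1
  have hQ : HasSubst Q := HasSubst.substInvOfIsUnit g hg1
  have hfQ : f = Q := by
    calc f = f.subst (g.subst Q) := by rw [subst_substInvOfIsUnit_right g hg0 hg1, X_subst]
      _ = Q := by
        rw [← subst_comp_subst_apply (HasSubst.of_constantCoeff_zero' hg0) hQ, h, subst_X hQ]
  rw [hfQ, subst_substInvOfIsUnit_right g hg0 hg1]

theorem subst_X_pow_eq_pow_mul_subst {m : ℕ} (hm : m ≠ 0) {u B : R⟦X⟧}
    (h : (X ^ m * B).subst (X * u) = (X * u).subst (X ^ m)) :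
    u.subst (X ^ m) = u ^ m * B.subst (X * u) := by
  have hXu : HasSubst (X * u) := HasSubst.of_constantCoeff_zero' (by simp)
  refine X_pow_mul_cancel (k := m) ?_
  rw [← subst_X_mul (by simp [hm]), ← h, subst_mul hXu, subst_pow hXu, subst_X hXu, mul_pow,
    mul_assoc]

theorem subst_eq_pow_of_subst_eq_subst_X_pow {m : ℕ} (hm : m ≠ 0) {f g φ : R⟦X⟧}
    (hf0 : constantCoeff f = 0) (hg0 : constantCoeff g = 0) (hg1 : IsUnit (coeff 1 g))
    (hfg : f.subst g = X) (hφ : φ.subst f = f.subst (X ^ m)) :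
    g.subst φ = g ^ m := by
  have hf := HasSubst.of_constantCoeff_zero' hf0
  have hg := HasSubst.of_constantCoeff_zero' hg0
  have hgm : HasSubst (g ^ m) := HasSubst.of_constantCoeff_zero' (by simp [hg0, hm])
  have hφ' : φ = f.subst (g ^ m) := by
    calc φ = subst g (subst f φ) := by rw [subst_comp_subst_apply hf hg, hfg, X_subst]
      _ = f.subst (g ^ m) := by
        rw [hφ, subst_comp_subst_apply (HasSubst.X_pow hm) hg, subst_pow hg, subst_X hg]
  rw [hφ', ← subst_comp_subst_apply hf hgm, subst_eq_X_of_subst_eq_X hg0 hg1 hfg, subst_X hgm]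

theorem mul_subst_eq_pow_of_subst_eq_pow {m : ℕ} (hm : m ≠ 0) {v B : R⟦X⟧}
    (h : (X * v).subst (X ^ m * B) = (X * v) ^ m) :
    B * v.subst (X ^ m * B) = v ^ m := by
  refine X_pow_mul_cancel (k := m) ?_
  rw [← mul_assoc, ← subst_X_mul (by simp [hm]), h, mul_pow]

end CommRing

section logDerivative

variable {K : Type*} [Field K]

noncomputable def logDerivative (A : K⟦X⟧) : K⟦X⟧ := d⁄dX K A * A⁻¹

theorem derivative_eq_logDerivative_mul {A : K⟦X⟧} (hA : constantCoeff A ≠ 0) :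
    d⁄dX K A = logDerivative A * A := by
  rw [logDerivative, mul_assoc, PowerSeries.inv_mul_cancel A hA, mul_one]

theorem logDerivative_mul {A B : K⟦X⟧} (hA : constantCoeff A ≠ 0) (hB : constantCoeff B ≠ 0) :
    logDerivative (A * B) = logDerivative A + logDerivative B := by
  rw [logDerivative, Derivation.leibniz, PowerSeries.mul_inv_rev, smul_eq_mul, smul_eq_mul,
    derivative_eq_logDerivative_mul hA, derivative_eq_logDerivative_mul hB]
  linear_combination (logDerivative A + logDerivative B) *
    (B * B⁻¹ * PowerSeries.mul_inv_cancel A hA + PowerSeries.mul_inv_cancel B hB)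

theorem logDerivative_pow {A : K⟦X⟧} (hA : constantCoeff A ≠ 0) (n : ℕ) :
    logDerivative (A ^ n) = n * logDerivative A := by
  induction n with
  | zero => simp [logDerivative]
  | succ n ih =>
    rw [pow_succ, logDerivative_mul (by simpa using pow_ne_zero n hA) hA, ih]
    push_cast
    ring

theorem inv_subst {A g : K⟦X⟧} (hg : constantCoeff g = 0) (hA : constantCoeff A ≠ 0) :
    A⁻¹.subst g = (A.subst g)⁻¹ := by
  rw [eq_inv_iff_mul_eq_one (by rwa [constantCoeff_subst_of_constantCoeff_eq_zero hg]),
    ← subst_mul (HasSubst.of_constantCoeff_zero' hg), PowerSeries.inv_mul_cancel A hA]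
  simpa using subst_C (a := g) (1 : K)

theorem logDerivative_subst {A g : K⟦X⟧} (hg : constantCoeff g = 0) (hA : constantCoeff A ≠ 0) :
    logDerivative (A.subst g) = (logDerivative A).subst g * d⁄dX K g := by
  rw [logDerivative, derivative_subst (HasSubst.of_constantCoeff_zero' hg), logDerivative,
    subst_mul (HasSubst.of_constantCoeff_zero' hg), inv_subst hg hA]
  ring

theorem X_mul_logDerivative_eq_of_subst_X_pow_eq {m : ℕ} (hm : m ≠ 0) {u B : K⟦X⟧}
    (hu : constantCoeff u ≠ 0) (hB : constantCoeff B ≠ 0)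
    (h : u.subst (X ^ m) = u ^ m * B.subst (X * u)) :
    (m : K⟦X⟧) * (X * logDerivative u).subst (X ^ m)
      = (m : K⟦X⟧) * (X * logDerivative u)
        + X * (u * (logDerivative B).subst (X * u) * (1 + X * logDerivative u)) := by
  have hXm : constantCoeff (X ^ m : K⟦X⟧) = 0 := by simp [hm]
  have hXu : constantCoeff (X * u) = 0 := by simp
  have hlog := congrArg logDerivative h
  rw [logDerivative_subst hXm hu, logDerivative_mul (by simpa using pow_ne_zero m hu)
      (by rwa [constantCoeff_subst_of_constantCoeff_eq_zero hXu]),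
    logDerivative_pow hu, logDerivative_subst hXu hB, derivative_pow, Derivation.leibniz,
    smul_eq_mul, smul_eq_mul, derivative_eq_logDerivative_mul hu, derivative_X] at hlog
  obtain ⟨μ, rfl⟩ : ∃ μ, m = μ + 1 := ⟨m - 1, by omega⟩
  rw [Nat.add_sub_cancel] at hlog
  rw [subst_X_mul hXm]
  linear_combination X * hlog

theorem X_mul_logDerivative_eq_of_mul_subst_eq_pow {m : ℕ} (hm : m ≠ 0) {v B : K⟦X⟧}
    (hv : constantCoeff v ≠ 0) (hB : constantCoeff B ≠ 0)
    (h : B * v.subst (X ^ m * B) = v ^ m) :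
    (m : K⟦X⟧) * (X * logDerivative v)
      = (X * logDerivative v).subst (X ^ m * B) * ((m : K⟦X⟧) + X * logDerivative B)
        + X * logDerivative B := by
  have hφ : constantCoeff (X ^ m * B) = 0 := by simp [hm]
  have hlog := congrArg logDerivative h
  rw [logDerivative_mul hB (by rwa [constantCoeff_subst_of_constantCoeff_eq_zero hφ]),
    logDerivative_subst hφ hv, logDerivative_pow hv, Derivation.leibniz, smul_eq_mul,
    smul_eq_mul, derivative_pow, derivative_X, derivative_eq_logDerivative_mul hB] at hlog
  obtain ⟨μ, rfl⟩ : ∃ μ, m = μ + 1 := ⟨m - 1, by omega⟩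
  rw [Nat.add_sub_cancel] at hlog
  rw [subst_X_mul hφ]
  linear_combination (-X) * hlog

theorem coeff_logDerivative_map_mem_range {R : Type*} [CommRing R] (ρ : R →+* K)
    {B : R⟦X⟧} (hB : constantCoeff B = 1) (n : ℕ) :
    coeff n (logDerivative (B.map ρ)) ∈ ρ.range := by
  have hinv : (B.invOfUnit 1).map ρ = (B.map ρ)⁻¹ :=
    (eq_inv_iff_mul_eq_one (by simp [constantCoeff_map, hB])).mpr
      (by rw [← map_mul, invOfUnit_mul B 1 (by simp [hB]), map_one])
  rw [logDerivative, ← hinv, coeff_mul]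
  refine sum_mem fun p _ => mul_mem ?_ (by rw [coeff_map]; exact ρ.mem_range_self _)
  rw [coeff_derivative, coeff_map]
  exact mul_mem (ρ.mem_range_self _) (add_mem (natCast_mem _ _) (one_mem _))

end logDerivative

section denomDvd

variable {K : Type*} [CommRing K] {S : Subring K} {m : ℕ}

theorem coeff_natCast_mul (A : K⟦X⟧) (n : ℕ) : coeff n ((m : K⟦X⟧) * A) = m * coeff n A := by
  rw [← map_natCast (C (R := K)) m, coeff_C_mul]

theorem coeff_pow_mem_of_coeff_mem {A : K⟦X⟧} (hA : ∀ i, coeff i A ∈ S) (k n : ℕ) :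
    coeff n (A ^ k) ∈ S := by
  induction k generalizing n with
  | zero => rw [pow_zero, coeff_one]; split_ifs <;> simp
  | succ k ih =>
    rw [pow_succ, coeff_mul]
    exact sum_mem fun p _ => mul_mem (ih p.1) (hA p.2)

theorem coeff_mul_mem_denomDvd {A B : K⟦X⟧} {n : ℕ}
    (hA : ∀ i ≤ n, coeff i A ∈ S.denomDvd m i i) (hB : ∀ i ≤ n, coeff i B ∈ S.denomDvd m i i) :
    ∀ i ≤ n, coeff i (A * B) ∈ S.denomDvd m i i := by
  intro i hi
  rw [coeff_mul]
  refine sum_mem fun p hp => ?_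
  rw [HasAntidiagonal.mem_antidiagonal] at hp
  have := Subring.mul_mem_denomDvd (hA p.1 (by omega)) (hB p.2 (by omega))
  rwa [hp] at this

theorem coeff_pow_mem_denomDvd {A : K⟦X⟧} {n : ℕ}
    (hA : ∀ i ≤ n, coeff i A ∈ S.denomDvd m i i) (k : ℕ) :
    ∀ i ≤ n, coeff i (A ^ k) ∈ S.denomDvd m i i := by
  induction k with
  | zero =>
    intro i _
    rw [pow_zero, coeff_one]
    split_ifs
    exacts [Subring.mem_denomDvd_of_mem (one_mem S), zero_mem _]
  | succ k ih => exact pow_succ A k ▸ coeff_mul_mem_denomDvd ih hA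

theorem coeff_subst_X_mul_mem_denomDvd {c u : K⟦X⟧} {n : ℕ} (hc : ∀ i, coeff i c ∈ S)
    (hu : ∀ i ≤ n, coeff i u ∈ S.denomDvd m i i) :
    ∀ i ≤ n, coeff i (c.subst (X * u)) ∈ S.denomDvd m i i := by
  intro i hi
  rw [coeff_subst_eq_sum (by simp)]
  refine sum_mem fun k hk => ?_
  rw [mem_range] at hk
  rw [mul_pow, coeff_X_pow_mul', if_pos (by omega)]
  exact Subring.mul_mem_denomDvd_of_mem_left (hc k)
    (Subring.denomDvd_mono (by omega) (by omega) (coeff_pow_mem_denomDvd hu k (i - k) (by omega)))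

theorem coeff_subst_mem_denomDvd {A φ : K⟦X⟧} (hφ : X ^ 2 ∣ φ) (hφS : ∀ i, coeff i φ ∈ S)
    {n a b : ℕ} (hA : ∀ k, 2 * k ≤ n → coeff k A ∈ S.denomDvd m a b) :
    coeff n (A.subst φ) ∈ S.denomDvd m a b := by
  have hφ0 : constantCoeff φ = 0 := X_dvd_iff.mp (dvd_trans (dvd_pow_self X two_ne_zero) hφ)
  rw [coeff_subst_eq_sum hφ0]
  refine sum_mem fun k _ => ?_
  by_cases hk : 2 * k ≤ n
  · exact mul_comm (coeff n (φ ^ k)) _ ▸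
      Subring.mul_mem_denomDvd_of_mem_left (coeff_pow_mem_of_coeff_mem hφS k n) (hA k hk)
  · have hφk : (X : K⟦X⟧) ^ (2 * k) ∣ φ ^ k := pow_mul (X : K⟦X⟧) 2 k ▸ pow_dvd_pow_of_dvd hφ k
    rw [X_pow_dvd_iff.mp hφk n (by omega), mul_zero]
    exact zero_mem _

theorem coeff_mem_denomDvd_of_X_mul_derivative_eq {v W : K⟦X⟧} (hvW : X * d⁄dX K v = W * v)
    (hW0 : coeff 0 W = 0) {n : ℕ} (hn : 0 < n)
    (hW : ∀ k ≤ n, coeff k W ∈ S.denomDvd m k (k - 1))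
    (hv : ∀ k < n, coeff k v ∈ S.denomDvd m k k) :
    coeff n v ∈ S.denomDvd m n n := by
  obtain ⟨n, rfl⟩ : ∃ n', n = n' + 1 := ⟨n - 1, by omega⟩
  apply Subring.mem_denomDvd_succ_right
  have hcoeff := congrArg (coeff (n + 1)) hvW
  rw [coeff_succ_X_mul, coeff_derivative, coeff_mul] at hcoeff
  rw [mul_comm, hcoeff]
  refine sum_mem fun ⟨k, s⟩ hks => ?_
  rw [HasAntidiagonal.mem_antidiagonal] at hks
  rcases Nat.eq_zero_or_pos k with rfl | hk
  · rw [hW0, zero_mul]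
    exact zero_mem _
  · exact Subring.denomDvd_mono (by omega) (by omega)
      (Subring.mul_mem_denomDvd (hW k (by omega)) (hv s (by omega)))

theorem coeff_mem_denomDvd_of_natCast_mul_subst_X_pow_eq (hm : 2 ≤ m) {u W c : K⟦X⟧}
    (hE : (m : K⟦X⟧) * W.subst (X ^ m) = (m : K⟦X⟧) * W + X * (u * c.subst (X * u) * (1 + W)))
    (huW : X * d⁄dX K u = W * u) (hW0 : coeff 0 W = 0) (hc : ∀ i, coeff i c ∈ S)
    (hu0 : coeff 0 u ∈ S) (n : ℕ) : coeff n u ∈ S.denomDvd m n n := by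
  suffices ∀ n, coeff n W ∈ S.denomDvd m n (n - 1) ∧ coeff n u ∈ S.denomDvd m n n from
    (this n).2
  intro n
  induction n using Nat.strong_induction_on with | _ n ih =>
  rcases n with _ | n
  · exact ⟨hW0 ▸ zero_mem _, Subring.mem_denomDvd_of_mem hu0⟩
  have hu : ∀ i ≤ n, coeff i u ∈ S.denomDvd m i i := fun i hi => (ih i (by omega)).2
  have hW : ∀ i ≤ n, coeff i (1 + W) ∈ S.denomDvd m i i := by
    intro i hi
    rw [map_add, coeff_one]
    refine add_mem ?_ (Subring.denomDvd_mono le_rfl (by omega) (ih i (by omega)).1)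
    split_ifs
    exacts [Subring.mem_denomDvd_of_mem (one_mem S), zero_mem _]
  have hcoeff := congrArg (coeff (n + 1)) hE
  rw [coeff_natCast_mul, coeff_subst_X_pow (by omega), map_add, coeff_natCast_mul,
    coeff_succ_X_mul, Algebra.algebraMap_self, RingHom.id_apply] at hcoeff
  have hWn : coeff (n + 1) W ∈ S.denomDvd m (n + 1) n := by
    refine Subring.mem_denomDvd_succ_left ?_
    rw [eq_sub_of_add_eq hcoeff.symm]
    refine sub_mem ?_ (coeff_mul_mem_denomDvd (coeff_mul_mem_denomDvd hu
      (coeff_subst_X_mul_mem_denomDvd hc hu)) hW n le_rfl)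
    split_ifs
    · have hlt : (n + 1) / m < n + 1 := Nat.div_lt_self n.succ_pos (by omega)
      exact Subring.mul_mem_denomDvd_of_mem_left (natCast_mem S m)
        (Subring.denomDvd_mono (by omega) (by omega) (ih _ hlt).1)
    · rw [mul_zero]
      exact zero_mem _
  refine ⟨hWn, coeff_mem_denomDvd_of_X_mul_derivative_eq huW hW0 n.succ_pos
    (fun k hk => ?_) (fun k hk => (ih k hk).2)⟩
  rcases hk.lt_or_eq with hk | rfl
  exacts [(ih k hk).1, hWn]

theorem coeff_mem_denomDvd_of_natCast_mul_eq_subst {v W c φ : K⟦X⟧} (hφ : X ^ 2 ∣ φ)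
    (hφS : ∀ i, coeff i φ ∈ S) (hc : ∀ i, coeff i c ∈ S)
    (hE : (m : K⟦X⟧) * W = W.subst φ * ((m : K⟦X⟧) + X * c) + X * c)
    (hvW : X * d⁄dX K v = W * v) (hW0 : coeff 0 W = 0) (hv0 : coeff 0 v ∈ S) (n : ℕ) :
    coeff n v ∈ S.denomDvd m n n := by
  have hΨ : ∀ i, coeff i ((m : K⟦X⟧) + X * c) ∈ S := by
    rintro (_ | i)
    · simp
    · rw [map_add, ← map_natCast (C (R := K)) m, coeff_C, if_neg i.succ_ne_zero, zero_add,
        coeff_succ_X_mul]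
      exact hc i
  have hW : ∀ n, coeff n W ∈ S.denomDvd m n (n - 1) := by
    intro n
    induction n using Nat.strong_induction_on with | _ n ih =>
    rcases n with _ | n
    · exact hW0 ▸ zero_mem _
    refine Subring.mem_denomDvd_succ_left ?_
    rw [← coeff_natCast_mul, hE, map_add, coeff_succ_X_mul, coeff_mul]
    refine add_mem (sum_mem fun p hp => ?_) (Subring.mem_denomDvd_of_mem (hc n))
    rw [mul_comm]
    refine Subring.mul_mem_denomDvd_of_mem_left (hΨ p.2) (coeff_subst_mem_denomDvd hφ hφS ?_)
    intro k hk
    rw [HasAntidiagonal.mem_antidiagonal] at hp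
    rcases Nat.eq_zero_or_pos k with rfl | hk0
    · exact hW0 ▸ zero_mem _
    · exact Subring.denomDvd_mono (by omega) (by omega) (ih k (by omega))
  induction n using Nat.strong_induction_on with | _ n ih =>
  rcases Nat.eq_zero_or_pos n with rfl | hn
  · exact Subring.mem_denomDvd_of_mem hv0
  · exact coeff_mem_denomDvd_of_X_mul_derivative_eq hvW hW0 hn (fun k _ => hW k) ih

end denomDvd

section Field

variable {K : Type*} [Field K] {S : Subring K} {m : ℕ}

theorem coeff_mem_denomDvd_of_subst_X_pow_eq (hm : 2 ≤ m) {u B : K⟦X⟧}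
    (hu0 : constantCoeff u = 1) (hB0 : constantCoeff B ≠ 0)
    (hc : ∀ i, coeff i (logDerivative B) ∈ S)
    (h : u.subst (X ^ m) = u ^ m * B.subst (X * u)) (n : ℕ) :
    coeff n u ∈ S.denomDvd m n n :=
  coeff_mem_denomDvd_of_natCast_mul_subst_X_pow_eq hm
    (X_mul_logDerivative_eq_of_subst_X_pow_eq (by omega) (by simp [hu0]) hB0 h)
    (by rw [derivative_eq_logDerivative_mul (by simp [hu0]), mul_assoc]) (coeff_zero_X_mul _)
    hc (by simp [hu0]) n

theorem coeff_mem_denomDvd_of_mul_subst_eq_pow (hm : 2 ≤ m) {v B : K⟦X⟧}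
    (hv0 : constantCoeff v = 1) (hB0 : constantCoeff B ≠ 0) (hBS : ∀ i, coeff i B ∈ S)
    (hc : ∀ i, coeff i (logDerivative B) ∈ S)
    (h : B * v.subst (X ^ m * B) = v ^ m) (n : ℕ) :
    coeff n v ∈ S.denomDvd m n n := by
  have hφS : ∀ i, coeff i (X ^ m * B) ∈ S := fun i => by
    rw [coeff_X_pow_mul']
    split_ifs
    exacts [hBS _, zero_mem _]
  exact coeff_mem_denomDvd_of_natCast_mul_eq_subst
    (dvd_mul_of_dvd_left (pow_dvd_pow (X : K⟦X⟧) hm) _) hφS hc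
    (X_mul_logDerivative_eq_of_mul_subst_eq_pow (by omega) (by simp [hv0]) hB0 h)
    (by rw [derivative_eq_logDerivative_mul (by simp [hv0]), mul_assoc]) (coeff_zero_X_mul _)
    (by simp [hv0]) n

theorem exists_coeff_eq_algebraMap_div {R : Type*} [CommRing R] [CharZero K] [Algebra R K]
    (hinj : Function.Injective (algebraMap R K)) (hm : m ≠ 0) {u : K⟦X⟧}
    (hu : ∀ n, coeff n u ∈ (algebraMap R K).range.denomDvd m n n) (hu0 : constantCoeff u = 1) :
    ∃ a : ℕ → R, a 0 = 1 ∧ ∀ k,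
      coeff k u = algebraMap R K (a k) / ((m : K) ^ k * (Nat.factorial k : K)) := by
  choose a ha using fun n => RingHom.mem_range.mp (Subring.mem_denomDvd.mp (hu n))
  refine ⟨a, hinj ?_, fun k => ?_⟩
  · simp [ha 0, hu0]
  · have hk : (m : K) ^ k * (Nat.factorial k : K) ≠ 0 :=
      mul_ne_zero (pow_ne_zero _ (Nat.cast_ne_zero.mpr hm))
        (Nat.cast_ne_zero.mpr k.factorial_ne_zero)
    rw [eq_div_iff hk, ha k, mul_comm]

end Field

end PowerSeries

/-- For `φ = x^m ∑ b_k x^k ∈ R[[x]]` with `b_0 = 1`, the Böttcher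
coordinate and its compositional inverse have the form
`x ∑ (a_k/(m^k k!)) x^k` with `a_0 = 1` and all `a_k ∈ R`. -/
theorem bottcher_denominator_bound {R K : Type*} [CommRing R] [CharZero R]
    [Field K] [Algebra R K] [IsFractionRing R K]
    (m : ℕ) (hm : 2 ≤ m)
    (φ : PowerSeries R) (hφlow : ∀ k < m, PowerSeries.coeff k φ = 0)
    (hφlead : PowerSeries.coeff m φ = 1)
    (f : PowerSeries K) (hf0 : PowerSeries.coeff 0 f = 0)
    (hf1 : PowerSeries.coeff 1 f = 1)
    (hfB : (φ.map (algebraMap R K)).comp f = f.comp (PowerSeries.X ^ m))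
    (g : PowerSeries K) (hg0 : PowerSeries.coeff 0 g = 0)
    (hg1 : PowerSeries.coeff 1 g = 1)
    (hginv : f.comp g = PowerSeries.X) :
    (∃ a : ℕ → R, a 0 = 1 ∧ ∀ k,
        PowerSeries.coeff (k + 1) f
          = algebraMap R K (a k) / ((m : K) ^ k * (Nat.factorial k : K))) ∧
      (∃ a : ℕ → R, a 0 = 1 ∧ ∀ k,
        PowerSeries.coeff (k + 1) g
          = algebraMap R K (a k) / ((m : K) ^ k * (Nat.factorial k : K))) := by
  have hinj := IsFractionRing.injective R K
  have : CharZero K := charZero_of_injective_algebraMap hinj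
  have hm0 : m ≠ 0 := by omega
  obtain ⟨BR, rfl⟩ := X_pow_dvd_iff.mpr hφlow
  rw [coeff_X_pow_mul', if_pos le_rfl, Nat.sub_self, coeff_zero_eq_constantCoeff_apply] at hφlead
  have hB0 : constantCoeff (BR.map (algebraMap R K)) ≠ 0 := by simp [constantCoeff_map, hφlead]
  have hBS (i : ℕ) : coeff i (BR.map (algebraMap R K)) ∈ (algebraMap R K).range := by
    rw [coeff_map]
    exact RingHom.mem_range_self _ _
  have hc := coeff_logDerivative_map_mem_range (algebraMap R K) hφlead
  rw [coeff_zero_eq_constantCoeff_apply] at hf0 hg0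
  obtain ⟨u, rfl⟩ := X_dvd_iff.mpr hf0
  obtain ⟨v, rfl⟩ := X_dvd_iff.mpr hg0
  rw [coeff_succ_X_mul, coeff_zero_eq_constantCoeff_apply] at hf1 hg1
  rw [comp_eq_subst (by simp), comp_eq_subst (by simp [hm0]), map_mul, map_pow, map_X] at hfB
  rw [comp_eq_subst (by simp)] at hginv
  have hφg := subst_eq_pow_of_subst_eq_subst_X_pow hm0 (by simp) (by simp) (by simp [hg1])
    hginv hfB
  simp only [coeff_succ_X_mul]
  exact ⟨exists_coeff_eq_algebraMap_div hinj hm0 (coeff_mem_denomDvd_of_subst_X_pow_eq hm hf1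
      hB0 hc (subst_X_pow_eq_pow_mul_subst hm0 hfB)) hf1,
    exists_coeff_eq_algebraMap_div hinj hm0 (coeff_mem_denomDvd_of_mul_subst_eq_pow hm hg1
      hB0 hBS hc (mul_subst_eq_pow_of_subst_eq_pow hm0 hφg)) hg1⟩
end

section
/- Let R be a commutative ring of characteristic 0 with fraction field K, let m ≥ 1 be an integer, and let f(x) = x·Σ_{k≥0} (a_k/(m^k·k!)) x^k ∈ K[[x]] with a_0 = 1 and a_k ∈ R for all k. Then the compositional inverse f^{-1}(x) ∈ x + x²K[[x]] is also of the form x·Σ_{k≥0} (b_k/(m^k·k!)) x^k with b_0 = 1 and b_k ∈ R for all k. -/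
open Finset Nat

namespace PowerSeries

variable {K : Type*} [CommRing K]

theorem pow_mul_factorial_mul_mul (c x y : K) (p q : ℕ) :
    c ^ (p + q) * (p + q)! * (x * y)
      = ((p + q).choose q : K) * ((c ^ p * p ! * x) * (c ^ q * q ! * y)) := by
  rw [← add_choose_mul_factorial_mul_factorial p q]
  push_cast
  ring

theorem pow_mul_factorial_mul_mul_mem {S : Subring K} {c x y : K} {p q : ℕ}
    (hx : c ^ p * p ! * x ∈ S) (hy : c ^ q * q ! * y ∈ S) :
    c ^ (p + q) * (p + q)! * (x * y) ∈ S := by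
  rw [pow_mul_factorial_mul_mul]
  exact S.mul_mem (natCast_mem S _) (S.mul_mem hx hy)

def factorialTypeSubring (S : Subring K) (c : K) (N : ℕ) : Subring K⟦X⟧ where
  carrier := {u | ∀ n < N, c ^ n * n ! * coeff n u ∈ S}
  zero_mem' _ _ := by simp
  one_mem' n _ := by
    rcases n with _ | n <;> simp [coeff_one, S.one_mem]
  add_mem' hu hv n hn := by
    simpa only [map_add, mul_add] using S.add_mem (hu n hn) (hv n hn)
  neg_mem' hu n hn := by
    simpa only [map_neg, mul_neg] using S.neg_mem (hu n hn)
  mul_mem' {u v} hu hv n hn := by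
    rw [coeff_mul, mul_sum]
    refine S.sum_mem fun pq hpq => ?_
    rw [HasAntidiagonal.mem_antidiagonal] at hpq
    subst hpq
    exact pow_mul_factorial_mul_mul_mem (hu _ (by omega)) (hv _ (by omega))

theorem coeff_succ_comp_X_mul (f u : K⟦X⟧) (n : ℕ) :
    coeff (n + 1) (f.comp (X * u))
      = ∑ j ∈ range (n + 1), coeff (j + 1) f * coeff (n - j) (u ^ (j + 1)) := by
  simp only [comp, coeff_mk, map_sum, coeff_C_mul]
  rw [sum_range_succ']
  simp only [pow_zero, coeff_one, add_eq_zero, one_ne_zero, and_false, if_false, mul_zero,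
    add_zero]
  refine sum_congr rfl fun j hj => ?_
  rw [mul_pow, coeff_X_pow_mul', if_pos (by simp at hj; omega)]
  congr 3
  omega

theorem comp_X_mul_mem_factorialTypeSubring {S : Subring K} {c : K} {f u : K⟦X⟧}
    (hf1 : coeff 1 f = 1) (hf : ∀ k, c ^ k * k ! * coeff (k + 1) f ∈ S)
    (hfu : f.comp (X * u) = X) (N : ℕ) : u ∈ factorialTypeSubring S c N := by
  induction N with
  | zero => exact fun n hn => absurd hn n.not_lt_zero
  | succ N ih =>
    intro n hn
    rcases Nat.lt_succ_iff_lt_or_eq.mp hn with hn | rfl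
    · exact ih n hn
    have hrec := coeff_succ_comp_X_mul f u n
    rw [hfu, sum_range_succ', hf1, zero_add, Nat.sub_zero, pow_one, one_mul] at hrec
    rw [eq_sub_of_add_eq' hrec.symm, mul_sub, mul_sum]
    refine S.sub_mem ?_ (S.sum_mem fun k hk => ?_)
    · rcases n with _ | n <;> simp [coeff_X, S.one_mem]
    · obtain ⟨d, rfl⟩ := Nat.exists_eq_add_of_lt (mem_range.mp hk)
      rw [show k + d + 1 - (k + 1) = d by omega, show k + d + 1 = (k + 1) + d by omega]
      exact pow_mul_factorial_mul_mul_mem (hf (k + 1)) (pow_mem ih _ d (by omega))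

end PowerSeries

open PowerSeries in
theorem inverse_of_m_factorial_type_general {R K : Type*} [CommRing R] [CharZero R]
    [Field K] [Algebra R K] [IsFractionRing R K]
    (m : ℕ) (hm : 1 ≤ m)
    (f : PowerSeries K)
    (a : ℕ → R) (ha0 : a 0 = 1)
    (ha : ∀ k, PowerSeries.coeff (k + 1) f
      = algebraMap R K (a k) / ((m : K) ^ k * (Nat.factorial k : K)))
    (g : PowerSeries K) (hg0 : PowerSeries.coeff 0 g = 0)
    (hg1 : PowerSeries.coeff 1 g = 1)
    (hginv : f.comp g = PowerSeries.X) :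
    ∃ b : ℕ → R, b 0 = 1 ∧ ∀ k,
      PowerSeries.coeff (k + 1) g
        = algebraMap R K (b k) / ((m : K) ^ k * (Nat.factorial k : K)) := by
  have hinj := IsFractionRing.injective R K
  have : CharZero K := charZero_of_injective_algebraMap hinj
  have hden (k : ℕ) : (m : K) ^ k * (k ! : K) ≠ 0 :=
    mul_ne_zero (pow_ne_zero _ (Nat.cast_ne_zero.mpr (by omega)))
      (Nat.cast_ne_zero.mpr k.factorial_ne_zero)
  have hf (k : ℕ) : (m : K) ^ k * k ! * coeff (k + 1) f ∈ (algebraMap R K).range :=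
    ⟨a k, by rw [ha, mul_div_cancel₀ _ (hden k)]⟩
  have hf1 : coeff 1 f = 1 := by simpa [ha0] using ha 0
  obtain ⟨u, rfl⟩ : X ∣ g := X_dvd_iff.mpr <| by rwa [← coeff_zero_eq_constantCoeff_apply]
  choose b hb using fun k =>
    comp_X_mul_mem_factorialTypeSubring hf1 hf hginv (k + 1) k k.lt_succ_self
  refine ⟨b, hinj ?_, fun k => ?_⟩
  · rw [map_one, hb 0]
    simpa [coeff_succ_X_mul] using hg1
  · rw [eq_div_iff (hden k), hb, mul_comm, coeff_succ_X_mul]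

/-- If `f(x) = x ∑ (a_k/(m^k·k!)) x^k` with `a_0 = 1` and all
`a_k ∈ R`, then the compositional inverse `f⁻¹` has the same shape:
`x ∑ (b_k/(m^k·k!)) x^k` with `b_0 = 1` and all `b_k ∈ R`. -/
theorem inverse_of_m_factorial_type {R K : Type*} [CommRing R] [CharZero R]
    [Field K] [Algebra R K] [IsFractionRing R K]
    (m : ℕ) (hm : 1 ≤ m)
    (f : PowerSeries K) (hf0 : PowerSeries.coeff 0 f = 0)
    (a : ℕ → R) (ha0 : a 0 = 1)
    (ha : ∀ k, PowerSeries.coeff (k + 1) f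
      = algebraMap R K (a k) / ((m : K) ^ k * (Nat.factorial k : K)))
    (g : PowerSeries K) (hg0 : PowerSeries.coeff 0 g = 0)
    (hg1 : PowerSeries.coeff 1 g = 1)
    (hginv : f.comp g = PowerSeries.X) :
    ∃ b : ℕ → R, b 0 = 1 ∧ ∀ k,
      PowerSeries.coeff (k + 1) g
        = algebraMap R K (b k) / ((m : K) ^ k * (Nat.factorial k : K)) :=
  inverse_of_m_factorial_type_general m hm f a ha0 ha g hg0 hg1 hginv
end

section
/- Let n ≥ 1 and let e_1, e_2, …, e_n be non-negative integers satisfying 1·e_1 + 2·e_2 + ⋯ + n·e_n = n. Then the rational number n! · ∏_{j=1}^n 1/(j!^{e_j} · e_j!) · (e_1 + e_2 + ⋯ + e_n) · ∏_{j=1}^n j^{e_j} is an integer divisible by n. -/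
/-!
Writing `j! = j · (j-1)!`, the quantity is `(∑ e_j) · n! / D(e)` with
`D(e) = ∏_j (j-1)!^{e_j} e_j!`, and `n!/D(e)` is the number of permutations of `n` letters
with `e_j` cycles of length `j`. For each `k` with `e_k ≠ 0`, removing one `k`-cycle
(`e'` is `e` with `e_k` lowered by one) gives `D(e) = (k-1)! · e_k · D(e')` and
`∑ j e'_j = n - k`, so
`e_k · n! / D(e) = n · C(n-1, k-1) · (n-k)! / D(e')`, an integer multiple of `n`
(choose the `k`-cycle through a fixed letter). Summing over `k` gives the claim.
-/

open Finset Nat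

/-- `(∑_{j ∈ S} j f_j)! / cycleTypeDenom S f` counts the permutations having `f j` cycles of
length `j` for each `j ∈ S`. -/
def cycleTypeDenom (S : Finset ℕ) (f : ℕ → ℕ) : ℕ :=
  ∏ j ∈ S, (j - 1)! ^ f j * (f j)!

lemma factorial_pred_pow_mul_factorial_dvd {j : ℕ} (m : ℕ) (hj : j ≠ 0) :
    (j - 1)! ^ m * m ! ∣ (j * m)! := by
  have h : j ! ^ m * m ! ∣ (m * j)! := ⟨uniformBell m j, by rw [← uniformBell_mul_eq m hj]; ring⟩
  rw [mul_comm j m]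
  exact (mul_dvd_mul_right (pow_dvd_pow_of_dvd (factorial_dvd_factorial (j.sub_le 1)) m) _).trans h

lemma cycleTypeDenom_dvd_factorial {S : Finset ℕ} (hS : ∀ j ∈ S, j ≠ 0) (f : ℕ → ℕ) :
    cycleTypeDenom S f ∣ (∑ j ∈ S, j * f j)! :=
  (prod_dvd_prod_of_dvd _ _ fun j hj => factorial_pred_pow_mul_factorial_dvd (f j) (hS j hj)).trans
    (prod_factorial_dvd_factorial_sum S _)

section RemoveCycle

variable {S : Finset ℕ} {f : ℕ → ℕ} {k : ℕ}

lemma cycleTypeDenom_eq_of_mem (hk : k ∈ S) (hfk : f k ≠ 0) :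
    cycleTypeDenom S f =
      (k - 1)! * f k * cycleTypeDenom S (Function.update f k (f k - 1)) := by
  obtain ⟨m, hm⟩ := exists_eq_add_one_of_ne_zero hfk
  rw [cycleTypeDenom, cycleTypeDenom, ← mul_prod_erase S _ hk, ← mul_prod_erase S _ hk,
    prod_congr rfl fun j hj => congrArg (fun x => (j - 1)! ^ x * x !)
      (Function.update_of_ne (ne_of_mem_erase hj) _ f)]
  simp only [Function.update_self, hm, Nat.add_sub_cancel, pow_succ, factorial_succ]
  ring

lemma sum_mul_update_pred_add (hk : k ∈ S) (hfk : f k ≠ 0) :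
    ∑ j ∈ S, j * Function.update f k (f k - 1) j + k = ∑ j ∈ S, j * f j := by
  obtain ⟨m, hm⟩ := exists_eq_add_one_of_ne_zero hfk
  rw [← add_sum_erase S _ hk, ← add_sum_erase S (fun j => j * f j) hk,
    sum_congr rfl fun j hj => congrArg (j * ·) (Function.update_of_ne (ne_of_mem_erase hj) _ f)]
  simp only [Function.update_self, hm, Nat.add_sub_cancel]
  ring

end RemoveCycle

lemma mul_factorial_pred_mul_factorial_dvd_factorial {n k : ℕ} (hk : k ≠ 0) (hkn : k ≤ n) :
    n * ((k - 1)! * (n - k)!) ∣ n ! := by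
  have h := factorial_mul_factorial_dvd_factorial (show k - 1 ≤ n - 1 by omega)
  rw [show n - 1 - (k - 1) = n - k by omega] at h
  rw [← mul_factorial_pred (show n ≠ 0 by omega)]
  exact mul_dvd_mul_left n h

lemma mul_cycleTypeDenom_dvd {S : Finset ℕ} (hS : ∀ j ∈ S, j ≠ 0) (f : ℕ → ℕ) {k : ℕ}
    (hk : k ∈ S) :
    (∑ j ∈ S, j * f j) * cycleTypeDenom S f ∣ f k * (∑ j ∈ S, j * f j)! := by
  rcases eq_or_ne (f k) 0 with hfk | hfk
  · simp [hfk]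
  set n := ∑ j ∈ S, j * f j
  set f' := Function.update f k (f k - 1)
  have hsum : ∑ j ∈ S, j * f' j + k = n := sum_mul_update_pred_add hk hfk
  have hD' : cycleTypeDenom S f' ∣ (n - k)! := by
    rw [← hsum, Nat.add_sub_cancel]
    exact cycleTypeDenom_dvd_factorial hS f'
  calc n * cycleTypeDenom S f
      = f k * ((k - 1)! * cycleTypeDenom S f' * n) := by
        rw [cycleTypeDenom_eq_of_mem hk hfk]; ring
    _ ∣ f k * ((k - 1)! * (n - k)! * n) := by gcongr
    _ ∣ f k * n ! := by
        gcongr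
        rw [mul_comm]
        exact mul_factorial_pred_mul_factorial_dvd_factorial (hS k hk) (by omega)

lemma mul_cycleTypeDenom_dvd_sum_mul_factorial {S : Finset ℕ} (hS : ∀ j ∈ S, j ≠ 0)
    (f : ℕ → ℕ) :
    (∑ j ∈ S, j * f j) * cycleTypeDenom S f ∣ (∑ j ∈ S, f j) * (∑ j ∈ S, j * f j)! := by
  rw [sum_mul (s := S) (f := f)]
  exact dvd_sum fun k hk => mul_cycleTypeDenom_dvd hS f hk

lemma prod_div_mul_prod_pow_eq_inv_cycleTypeDenom {S : Finset ℕ} (hS : ∀ j ∈ S, j ≠ 0)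
    (f : ℕ → ℕ) :
    (∏ j ∈ S, (1 : ℚ) / ((j ! : ℚ) ^ f j * ((f j)! : ℚ))) * ∏ j ∈ S, (j : ℚ) ^ f j =
      ((cycleTypeDenom S f : ℕ) : ℚ)⁻¹ := by
  rw [← prod_mul_distrib, cycleTypeDenom, cast_prod, ← prod_inv_distrib]
  refine prod_congr rfl fun j hj => ?_
  rw [← mul_factorial_pred (hS j hj)]
  have : (j : ℚ) ≠ 0 := cast_ne_zero.mpr (hS j hj)
  push_cast
  field_simp
  ring

theorem combinatorial_divisibility_general (n : ℕ) (e : ℕ → ℕ)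
    (he : ∑ j ∈ Finset.Icc 1 n, j * e j = n) :
    ∃ c : ℤ,
      (Nat.factorial n : ℚ) *
          (∏ j ∈ Finset.Icc 1 n,
            (1 : ℚ) / ((Nat.factorial j : ℚ) ^ (e j) * (Nat.factorial (e j) : ℚ))) *
          (∑ j ∈ Finset.Icc 1 n, (e j : ℚ)) *
          (∏ j ∈ Finset.Icc 1 n, (j : ℚ) ^ (e j))
        = (n : ℚ) * (c : ℚ) := by
  have hS : ∀ j ∈ Icc 1 n, j ≠ 0 := fun j hj => by grind
  obtain ⟨c, hc⟩ := mul_cycleTypeDenom_dvd_sum_mul_factorial hS e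
  rw [he] at hc
  refine ⟨c, ?_⟩
  have hD : ((cycleTypeDenom (Icc 1 n) e : ℕ) : ℚ) ≠ 0 := by
    exact_mod_cast (prod_pos fun j _ => by positivity).ne'
  calc _ = (n ! : ℚ) * (∑ j ∈ Icc 1 n, (e j : ℚ)) *
        ((∏ j ∈ Icc 1 n, (1 : ℚ) / ((j ! : ℚ) ^ e j * ((e j)! : ℚ))) *
          ∏ j ∈ Icc 1 n, (j : ℚ) ^ e j) := by ring
    _ = (((∑ j ∈ Icc 1 n, e j) * n ! : ℕ) : ℚ) / (cycleTypeDenom (Icc 1 n) e : ℕ) := by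
        rw [prod_div_mul_prod_pow_eq_inv_cycleTypeDenom hS]; push_cast; ring
    _ = n * c := by
        rw [hc, cast_mul, cast_mul]; field_simp

/-- If `1·e_1 + 2·e_2 + ⋯ + n·e_n = n`, then
`n! · ∏_j 1/(j!^{e_j}·e_j!) · (∑_j e_j) · ∏_j j^{e_j}` is an integer
divisible by `n`. -/
theorem combinatorial_divisibility (n : ℕ) (hn : 1 ≤ n) (e : ℕ → ℕ)
    (he : ∑ j ∈ Finset.Icc 1 n, j * e j = n) :
    ∃ c : ℤ,
      (Nat.factorial n : ℚ) *
          (∏ j ∈ Finset.Icc 1 n,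
            (1 : ℚ) / ((Nat.factorial j : ℚ) ^ (e j) * (Nat.factorial (e j) : ℚ))) *
          (∑ j ∈ Finset.Icc 1 n, (e j : ℚ)) *
          (∏ j ∈ Finset.Icc 1 n, (j : ℚ) ^ (e j))
        = (n : ℚ) * (c : ℚ) :=
  combinatorial_divisibility_general n e he
end

section
/- Let m ≥ 1 and k ≥ 1 be integers. There exists a polynomial Δ_{m,k} ∈ ℤ[T_0, T_1, …, T_{k-1}] which is a ℤ-linear combination of monomials T_0^{e_0}·T_1^{e_1}·⋯·T_{k-1}^{e_{k-1}} with Σ_{ℓ=0}^{k-1} e_ℓ = m and Σ_{ℓ=0}^{k-1} ℓ·e_ℓ = k, such that for every commutative ring A, every derivation D : A → A, and every y ∈ A, one has D^k(y^m) = m·y^{m-1}·D^k(y) + m·Δ_{m,k}(y, D(y), D²(y), …, D^{k-1}(y)). -/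
open MvPolynomial

noncomputable def fder : Derivation ℤ (MvPolynomial ℕ ℤ) (MvPolynomial ℕ ℤ) :=
  MvPolynomial.mkDerivation ℤ (fun i => MvPolynomial.X (i + 1))

@[simp] lemma fder_X (i : ℕ) : fder (X i) = X (i + 1) :=
  MvPolynomial.mkDerivation_X _ _ _

noncomputable def Del (m : ℕ) : ℕ → MvPolynomial ℕ ℤ
  | 0 => 0
  | 1 => 0
  | (k + 2) => C ((m : ℤ) - 1) * X 0 ^ (m - 2) * X 1 * X (k + 1) + fder (Del m (k + 1))

section eval
variable {A : Type*} [CommRing A] (D : A → A)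
  (hadd : ∀ a b : A, D (a + b) = D a + D b)
  (hmul : ∀ a b : A, D (a * b) = a * D b + D a * b)

include hadd hmul

lemma D_one : D 1 = 0 := by
  have h2 : D 1 + D 1 = D 1 := by
    have := hmul 1 1; simp only [one_mul, mul_one] at this; exact this.symm
  exact (add_eq_left).mp h2

lemma D_int (c : ℤ) : D ((c : A)) = 0 := by
  have h1 : ((c : A)) = c • (1 : A) := by simp
  have h := map_zsmul (AddMonoidHom.mk' D hadd) c (1 : A)
  rw [h1]
  have h' : D (c • (1 : A)) = c • D 1 := h
  rw [h', D_one D hadd hmul, smul_zero]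

lemma D_pow (y : A) (n : ℕ) : D (y ^ n) = (n : A) * y ^ (n - 1) * D y := by
  induction n with
  | zero => simpa using D_one D hadd hmul
  | succ n ih =>
    rw [pow_succ, hmul, ih]
    cases n with
    | zero => simp
    | succ n =>
      rw [Nat.add_sub_cancel, Nat.add_sub_cancel]
      push_cast
      ring

lemma D_aeval (y : A) (P : MvPolynomial ℕ ℤ) :
    D (MvPolynomial.aeval (fun i : ℕ => D^[i] y) P)
      = MvPolynomial.aeval (fun i : ℕ => D^[i] y) (fder P) := by
  induction P using MvPolynomial.induction_on with
  | C c => simp [MvPolynomial.algebraMap_eq, D_int D hadd hmul, fder]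
  | add p q hp hq => rw [map_add, hadd, hp, hq, map_add, map_add]
  | mul_X p i hp =>
    rw [map_mul, hmul, hp, Derivation.leibniz, smul_eq_mul, smul_eq_mul, map_add,
      map_mul, map_mul, fder_X, aeval_X, aeval_X, Function.iterate_succ_apply']
    ring


lemma D_nat_mul (n : ℕ) (x : A) : D ((n : A) * x) = (n : A) * D x := by
  have h := map_nsmul (AddMonoidHom.mk' D hadd) n x
  have h' : D (n • x) = n • D x := h
  simpa [nsmul_eq_mul] using h'

lemma eval_Del (m : ℕ) (hm : 1 ≤ m) (y : A) (k : ℕ) (hk : 1 ≤ k) :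
    D^[k] (y ^ m) = (m : A) * y ^ (m - 1) * D^[k] y
      + (m : A) * MvPolynomial.aeval (fun i : ℕ => D^[i] y) (Del m k) := by
  induction k, hk using Nat.le_induction with
  | base =>
    simp only [Del, map_zero, mul_zero, add_zero, Function.iterate_one]
    exact D_pow D hadd hmul y m
  | succ k hk ih =>
    obtain ⟨j, rfl⟩ : ∃ j, k = j + 1 := ⟨k - 1, by omega⟩
    rw [Function.iterate_succ_apply', ih, hadd]
    rw [show (m : A) * y ^ (m - 1) * D^[j+1] y = (m : A) * (y ^ (m-1) * D^[j+1] y) by ring,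
      D_nat_mul D hadd hmul, hmul, D_nat_mul D hadd hmul, D_aeval D hadd hmul,
      D_pow D hadd hmul y (m - 1)]
    show _ = _ + (m:A) * MvPolynomial.aeval _ (Del m (j + 2))
    rw [show Del m (j + 2)
        = C ((m : ℤ) - 1) * X 0 ^ (m - 2) * X 1 * X (j + 1) + fder (Del m (j + 1)) from rfl]
    rw [map_add, map_mul, map_mul, map_mul, map_pow, aeval_X, aeval_X, aeval_X, aeval_C]
    rw [← Function.iterate_succ_apply' D (j+1) y]
    have h1 : ((m - 1 : ℕ) : A) = (m : A) - 1 := by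
      rw [Nat.cast_sub hm, Nat.cast_one]
    have h2 : m - 1 - 1 = m - 2 := by omega
    rw [h1, h2]
    simp only [Function.iterate_one, Function.iterate_zero, id_eq, algebraMap_int_eq,
      eq_intCast, Int.cast_sub, Int.cast_natCast, Int.cast_one]
    ring


end eval

lemma fder_monomial (t : ℕ →₀ ℕ) (c : ℤ) :
    fder (monomial t c) =
      c • t.sum fun i e =>
        monomial (t - Finsupp.single i 1 + Finsupp.single (i + 1) 1) (e : ℤ) := by
  rw [fder, MvPolynomial.mkDerivation_monomial]
  congr 1
  refine Finsupp.sum_congr fun i _ => ?_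
  rw [smul_eq_mul, X, monomial_mul, mul_one]

lemma fder_support (P : MvPolynomial ℕ ℤ) {d : ℕ →₀ ℕ} (hd : d ∈ (fder P).support) :
    ∃ s ∈ P.support, ∃ i ∈ s.support,
      d = s - Finsupp.single i 1 + Finsupp.single (i + 1) 1 := by
  classical
  have hP : fder P = ∑ s ∈ P.support, fder (monomial s (coeff s P)) := by
    conv_lhs => rw [P.as_sum]
    rw [map_sum]
  rw [hP] at hd
  obtain ⟨s, hs, hd⟩ := Finset.mem_biUnion.mp (MvPolynomial.support_sum hd)
  refine ⟨s, hs, ?_⟩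
  rw [fder_monomial] at hd
  have hd2 := MvPolynomial.support_smul hd
  rw [Finsupp.sum] at hd2
  obtain ⟨i, hi, hd3⟩ := Finset.mem_biUnion.mp (MvPolynomial.support_sum hd2)
  refine ⟨i, hi, ?_⟩
  rw [MvPolynomial.support_monomial] at hd3
  split_ifs at hd3 with h
  · simp at hd3
  · exact (Finset.mem_singleton.mp hd3)

lemma Del_support (m : ℕ) (hm : 1 ≤ m) (k : ℕ) (hk : 1 ≤ k) :
    ∀ d ∈ (Del m k).support,
      (d.sum fun _ e => e) = m ∧ (d.sum fun i e => i * e) = k ∧ ∀ i, k ≤ i → d i = 0 := by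
  classical
  induction k, hk using Nat.le_induction with
  | base => intro d hd; simp [Del] at hd
  | succ k hk ih =>
    obtain ⟨j, rfl⟩ : ∃ j, k = j + 1 := ⟨k - 1, by omega⟩
    intro d hd
    rw [show Del m (j + 2)
        = C ((m : ℤ) - 1) * X 0 ^ (m - 2) * X 1 * X (j + 1) + fder (Del m (j + 1)) from rfl]
      at hd
    rcases Finset.mem_union.mp (MvPolynomial.support_add hd) with h | h
    · -- the explicit monomial
      have hmono : C ((m : ℤ) - 1) * X 0 ^ (m - 2) * X (1:ℕ) * X (j + 1)
          = monomial (Finsupp.single 0 (m - 2) + Finsupp.single 1 1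
              + Finsupp.single (j + 1) 1) ((m : ℤ) - 1) := by
        rw [X_pow_eq_monomial, C_mul_monomial, mul_one, X, X, monomial_mul, monomial_mul,
          mul_one, mul_one]
      rw [hmono, MvPolynomial.support_monomial] at h
      split_ifs at h with hc
      · simp at h
      · have hm2 : 2 ≤ m := by
          by_contra hlt
          have : m = 1 := by omega
          subst this; simp at hc
        have hd' := Finset.mem_singleton.mp h
        subst hd'
        refine ⟨?_, ?_, ?_⟩
        · rw [Finsupp.sum_add_index' (fun _ => rfl) (fun _ _ _ => rfl),
            Finsupp.sum_add_index' (fun _ => rfl) (fun _ _ _ => rfl),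
            Finsupp.sum_single_index rfl, Finsupp.sum_single_index rfl,
            Finsupp.sum_single_index rfl]
          omega
        · rw [Finsupp.sum_add_index' (fun i => mul_zero i) (fun i a b => Nat.mul_add i a b),
            Finsupp.sum_add_index' (fun i => mul_zero i) (fun i a b => Nat.mul_add i a b),
            Finsupp.sum_single_index (mul_zero 0), Finsupp.sum_single_index (mul_zero 1),
            Finsupp.sum_single_index (mul_zero (j + 1))]
          omega
        · intro i hi
          simp only [Finsupp.add_apply, Finsupp.single_apply]
          have h0 : ¬ ((0 : ℕ) = i) := by omega
          have h1 : ¬ ((1 : ℕ) = i) := by omega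
          have h2 : ¬ (j + 1 = i) := by omega
          rw [if_neg h0, if_neg h1, if_neg h2]
          simp
    · -- the derivative part
      obtain ⟨s, hs, i, hi, rfl⟩ := fder_support _ h
      obtain ⟨hdeg, hwt, hvars⟩ := ih s hs
      have hle : Finsupp.single i 1 ≤ s :=
        Finsupp.single_le_iff.mpr (Nat.one_le_iff_ne_zero.mpr (Finsupp.mem_support_iff.mp hi))
      set t := s - Finsupp.single i 1 with ht
      have hst : t + Finsupp.single i 1 = s := tsub_add_cancel_of_le hle
      have hik : i < j + 1 := by
        by_contra hik
        exact (Finsupp.mem_support_iff.mp hi) (hvars i (by omega))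
      refine ⟨?_, ?_, ?_⟩
      · rw [Finsupp.sum_add_index' (fun _ => rfl) (fun _ _ _ => rfl),
          Finsupp.sum_single_index rfl]
        rw [← hst, Finsupp.sum_add_index' (fun _ => rfl) (fun _ _ _ => rfl),
          Finsupp.sum_single_index rfl] at hdeg
        omega
      · rw [Finsupp.sum_add_index' (fun i => mul_zero i) (fun i a b => Nat.mul_add i a b),
          Finsupp.sum_single_index (mul_zero (i + 1))]
        rw [← hst, Finsupp.sum_add_index' (fun i => mul_zero i) (fun i a b => Nat.mul_add i a b),
          Finsupp.sum_single_index (mul_zero i)] at hwt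
        omega
      · intro l hl
        have hsl : s l = 0 := hvars l (by omega)
        have htl : t l ≤ s l := by
          rw [ht, Finsupp.tsub_apply]
          exact Nat.sub_le _ _
        simp only [Finsupp.add_apply, Finsupp.single_apply]
        rw [if_neg (by omega : ¬ (i + 1 = l))]
        omega

/-- There is a polynomial `Δ_{m,k} ∈ ℤ[T_0,…,T_{k-1}]`, an
integer combination of monomials of degree `m` and weight `k`, such that for
every commutative ring `A`, every derivation `D : A → A`, and every `y ∈ A`,
`D^k(y^m) = m·y^{m-1}·D^k(y) + m·Δ_{m,k}(y, D y, …, D^{k-1} y)`. -/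
theorem iterated_derivative_of_power (m k : ℕ) (hm : 1 ≤ m) (hk : 1 ≤ k) :
    ∃ Δ : MvPolynomial (Fin k) ℤ,
      (∀ d ∈ Δ.support, (∑ i, d i) = m ∧ (∑ i : Fin k, (i : ℕ) * d i) = k) ∧
      ∀ (A : Type*) [CommRing A] (D : A → A),
        (∀ a b : A, D (a + b) = D a + D b) →
        (∀ a b : A, D (a * b) = a * D b + D a * b) →
        ∀ y : A,
          D^[k] (y ^ m)
            = (m : A) * y ^ (m - 1) * D^[k] y
              + (m : A) * MvPolynomial.aeval (fun i : Fin k => D^[(i : ℕ)] y) Δ := by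
  classical
  have hvars : ↑(Del m k).vars ⊆ Set.range (Fin.val : Fin k → ℕ) := by
    intro i hi
    obtain ⟨d, hd, hid⟩ := (MvPolynomial.mem_vars i).mp hi
    have h := (Del_support m hm k hk d hd).2.2 i
    have hik : i < k := by
      by_contra hc
      exact (Finsupp.mem_support_iff.mp hid) (h (by omega))
    exact ⟨⟨i, hik⟩, rfl⟩
  obtain ⟨Δ, hΔ⟩ := MvPolynomial.exists_rename_eq_of_vars_subset_range (Del m k)
    (Fin.val : Fin k → ℕ) Fin.val_injective hvars
  refine ⟨Δ, ?_, ?_⟩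
  · intro d hd
    have hmem : Finsupp.mapDomain (Fin.val : Fin k → ℕ) d ∈ (Del m k).support := by
      rw [← hΔ, MvPolynomial.support_rename_of_injective Fin.val_injective]
      exact Finset.mem_image_of_mem _ hd
    obtain ⟨hdeg, hwt, -⟩ := Del_support m hm k hk _ hmem
    have hdeg' : (d.sum fun _ e => e) = m := by
      rw [Finsupp.sum_mapDomain_index (fun _ => rfl) (fun _ _ _ => rfl)] at hdeg
      exact hdeg
    have hwt' : (d.sum fun i e => (i : ℕ) * e) = k := by
      rw [Finsupp.sum_mapDomain_index (fun b => mul_zero b)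
        (fun b x y => Nat.mul_add b x y)] at hwt
      exact hwt
    constructor
    · rw [← hdeg', Finsupp.sum]
      exact (Finset.sum_subset (Finset.subset_univ _)
        (fun i _ hi => Finsupp.notMem_support_iff.mp hi)).symm
    · have heq : ∑ i : Fin k, (i : ℕ) * d i = d.sum fun i e => (i : ℕ) * e := by
        rw [Finsupp.sum]
        refine (Finset.sum_subset (Finset.subset_univ _) (fun i _ hi => ?_)).symm
        rw [Finsupp.notMem_support_iff.mp hi, mul_zero]
      rw [heq]
      exact hwt'
  · intro A _ D hadd hmul y
    rw [eval_Del D hadd hmul m hm y k hk]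
    congr 1
    rw [← hΔ, MvPolynomial.aeval_rename]
    rfl
end

section
/- Let K be a complete nonarchimedean (ultrametric) normed field, and let f(x) = x·Σ_{k≥0} a_k x^k ∈ K[[x]] with ‖a_0‖ = 1 and ‖a_k‖ ≤ 1 for all k. Then the series f converges at every point of the open unit disk D = {x ∈ K : ‖x‖ < 1}, and its evaluation defines a bijective isometry f : D → D; in particular ‖f(x) − f(y)‖ = ‖x − y‖ for all x, y ∈ D. -/
/-!
Write `f(x) = a₀ x + g(x)`. Factoring `x^(k+1) - y^(k+1)` by the geometric sum shows, term by term
and by the ultrametric inequality, that `‖g(x) - g(y)‖ ≤ max ‖x‖ ‖y‖ · ‖x - y‖ < ‖x - y‖` on the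
open unit disk. Since `‖a₀ (x - y)‖ = ‖x - y‖`, all triangles being isosceles gives
`‖f(x) - f(y)‖ = ‖x - y‖`. For surjectivity onto `b`, the Newton-type map
`z ↦ z + a₀⁻¹ (b - f(z))` is a contraction with constant `‖b‖` of the closed ball of radius `‖b‖`;
its fixed point solves `f(z) = b`.
-/

open Filter Metric Set

lemma norm_eq_of_norm_sub_lt {E : Type*} [SeminormedAddCommGroup E] [IsUltrametricDist E]
    {v w : E} (h : ‖v - w‖ < ‖w‖) : ‖v‖ = ‖w‖ := by
  simpa [h.ne, max_eq_right h.le] using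
    IsUltrametricDist.norm_add_eq_max_of_norm_ne_norm h.ne

section Ultrametric

variable {K : Type*} [NormedField K] [IsUltrametricDist K]

lemma norm_pow_succ_sub_pow_succ_le (x y : K) (n : ℕ) :
    ‖x ^ (n + 1) - y ^ (n + 1)‖ ≤ ‖x - y‖ * max ‖x‖ ‖y‖ ^ n := by
  rw [← geom_sum₂_mul x y (n + 1), norm_mul, mul_comm]
  gcongr
  refine IsUltrametricDist.norm_sum_le_of_forall_le_of_nonneg (by positivity) fun i hi => ?_
  have hin : i ≤ n := Nat.lt_succ_iff.mp (Finset.mem_range.mp hi)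
  rw [norm_mul, norm_pow, norm_pow, Nat.add_sub_cancel]
  calc ‖x‖ ^ i * ‖y‖ ^ (n - i) ≤ max ‖x‖ ‖y‖ ^ i * max ‖x‖ ‖y‖ ^ (n - i) := by
        gcongr
        exacts [le_max_left _ _, le_max_right _ _]
    _ = max ‖x‖ ‖y‖ ^ n := by rw [← pow_add, Nat.add_sub_cancel' hin]

lemma exists_eq_of_norm_sub_sub_mul_le [CompleteSpace K] {f : K → K} {u : K} (hu : ‖u‖ = 1)
    (hf0 : f 0 = 0)
    (hf : ∀ x y, ‖x‖ < 1 → ‖y‖ < 1 → ‖f x - f y - u * (x - y)‖ ≤ max ‖x‖ ‖y‖ * ‖x - y‖)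
    {b : K} (hb : ‖b‖ < 1) : ∃ x, ‖x‖ ≤ ‖b‖ ∧ f x = b := by
  have hu0 : u ≠ 0 := norm_ne_zero_iff.mp (by simp [hu])
  set T : K → K := fun z => z + u⁻¹ * (b - f z)
  have hT : ∀ z ∈ closedBall (0 : K) ‖b‖, ∀ w ∈ closedBall (0 : K) ‖b‖,
      ‖T z - T w‖ ≤ ‖b‖ * ‖z - w‖ := by
    intro z hz w hw
    rw [mem_closedBall_zero_iff] at hz hw
    have : T z - T w = -u⁻¹ * (f z - f w - u * (z - w)) := by
      simp only [T]; field_simp; ring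
    rw [this, norm_mul, norm_neg, norm_inv, hu, inv_one, one_mul]
    exact (hf z w (hz.trans_lt hb) (hw.trans_lt hb)).trans (by gcongr; exact max_le hz hw)
  have hmaps : MapsTo T (closedBall 0 ‖b‖) (closedBall 0 ‖b‖) := by
    intro z hz
    have h0 : (0 : K) ∈ closedBall 0 ‖b‖ := mem_closedBall_self (norm_nonneg b)
    have hT0 : ‖T 0‖ = ‖b‖ := by simp [T, hf0, hu]
    rw [mem_closedBall_zero_iff] at hz ⊢
    calc ‖T z‖ = ‖(T z - T 0) + T 0‖ := by rw [sub_add_cancel]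
      _ ≤ max ‖T z - T 0‖ ‖T 0‖ := IsUltrametricDist.norm_add_le_max _ _
      _ ≤ ‖b‖ := max_le ((hT z (by simpa using hz) 0 h0).trans (by
          rw [sub_zero]; exact mul_le_of_le_one_right (norm_nonneg b) (hz.trans hb.le))) hT0.le
  have hcontr : ContractingWith ‖b‖₊ (hmaps.restrict T _ _) := by
    refine ⟨by exact_mod_cast hb, LipschitzWith.of_dist_le_mul fun z w => ?_⟩
    simpa [Subtype.dist_eq, dist_eq_norm] using hT z z.2 w w.2
  obtain ⟨x, hx, hfix, -⟩ := hcontr.exists_fixedPoint' isClosed_closedBall.isComplete hmaps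
    (mem_closedBall_self (norm_nonneg b)) (edist_ne_top _ _)
  refine ⟨x, mem_closedBall_zero_iff.mp hx, ?_⟩
  have hfix' : x + u⁻¹ * (b - f x) = x := hfix
  simpa [hu0, sub_eq_zero, eq_comm] using hfix'

end Ultrametric

section Series

variable {K : Type*} [NormedField K]

noncomputable def seriesMulX (c : ℕ → K) (x : K) : K :=
  ∑' k, c k * x ^ (k + 1)

@[simp]
lemma seriesMulX_zero (c : ℕ → K) : seriesMulX c 0 = 0 := by
  simp [seriesMulX]

variable [IsUltrametricDist K] [CompleteSpace K] {c : ℕ → K} {x y : K}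

lemma summable_mul_pow_succ (hc : ∀ k, ‖c k‖ ≤ 1) (hx : ‖x‖ < 1) :
    Summable fun k => c k * x ^ (k + 1) := by
  refine NonarchimedeanAddGroup.summable_of_tendsto_cofinite_zero ?_
  rw [Nat.cofinite_eq_atTop, tendsto_zero_iff_norm_tendsto_zero]
  refine squeeze_zero (fun _ => norm_nonneg _) (g := fun k => ‖x‖ ^ (k + 1)) (fun k => ?_)
    ((tendsto_pow_atTop_nhds_zero_of_lt_one (norm_nonneg x) hx).comp (tendsto_add_atTop_nat 1))
  rw [norm_mul, norm_pow]
  exact mul_le_of_le_one_left (by positivity) (hc k)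

lemma hasSum_seriesMulX (hc : ∀ k, ‖c k‖ ≤ 1) (hx : ‖x‖ < 1) :
    HasSum (fun k => c k * x ^ (k + 1)) (seriesMulX c x) :=
  (summable_mul_pow_succ hc hx).hasSum

lemma seriesMulX_sub_sub_eq_tsum (hc : ∀ k, ‖c k‖ ≤ 1) (hx : ‖x‖ < 1) (hy : ‖y‖ < 1) :
    seriesMulX c x - seriesMulX c y - c 0 * (x - y) =
      ∑' k, c (k + 1) * (x ^ (k + 2) - y ^ (k + 2)) := by
  have hsum : HasSum (fun k => c k * (x ^ (k + 1) - y ^ (k + 1)))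
      (seriesMulX c x - seriesMulX c y) := by
    simpa only [mul_sub] using (hasSum_seriesMulX hc hx).sub (hasSum_seriesMulX hc hy)
  rw [hsum.tsum_eq.symm, hsum.summable.tsum_eq_zero_add]
  simp

lemma norm_seriesMulX_sub_sub_le (hc : ∀ k, ‖c k‖ ≤ 1) (hx : ‖x‖ < 1) (hy : ‖y‖ < 1) :
    ‖seriesMulX c x - seriesMulX c y - c 0 * (x - y)‖ ≤ max ‖x‖ ‖y‖ * ‖x - y‖ := by
  rw [seriesMulX_sub_sub_eq_tsum hc hx hy]
  have hm : max ‖x‖ ‖y‖ ≤ 1 := (max_lt hx hy).le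
  refine IsUltrametricDist.norm_tsum_le_of_forall_le_of_nonneg (by positivity) fun k => ?_
  calc ‖c (k + 1) * (x ^ (k + 2) - y ^ (k + 2))‖
      ≤ 1 * (‖x - y‖ * max ‖x‖ ‖y‖ ^ (k + 1)) := by
        rw [norm_mul]
        gcongr
        exacts [hc _, norm_pow_succ_sub_pow_succ_le x y (k + 1)]
    _ ≤ max ‖x‖ ‖y‖ * ‖x - y‖ := by
        rw [one_mul, mul_comm]
        gcongr
        exact pow_le_of_le_one (by positivity) hm k.succ_ne_zero

lemma norm_seriesMulX_sub (hc0 : ‖c 0‖ = 1) (hc : ∀ k, ‖c k‖ ≤ 1) (hx : ‖x‖ < 1)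
    (hy : ‖y‖ < 1) : ‖seriesMulX c x - seriesMulX c y‖ = ‖x - y‖ := by
  rcases eq_or_ne x y with rfl | hxy
  · simp
  have hxy' : 0 < ‖x - y‖ := norm_pos_iff.mpr (sub_ne_zero.mpr hxy)
  have hlin : ‖c 0 * (x - y)‖ = ‖x - y‖ := by rw [norm_mul, hc0, one_mul]
  rw [← hlin]
  refine norm_eq_of_norm_sub_lt ((norm_seriesMulX_sub_sub_le hc hx hy).trans_lt ?_)
  rw [hlin]
  exact mul_lt_of_lt_one_left hxy' (max_lt hx hy)

end Series

/-- If `f(x) = x ∑ a_k x^k` with `‖a_0‖ = 1` and all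
`‖a_k‖ ≤ 1` over a complete nonarchimedean normed field, then `f` converges on
the open unit disk and defines a bijective isometry of the disk to itself. -/
theorem isometry_of_integral_coeffs {K : Type*} [NormedField K] [CompleteSpace K]
    [IsUltrametricDist K]
    (a : ℕ → K) (ha0 : ‖a 0‖ = 1) (ha : ∀ k, ‖a k‖ ≤ 1) :
    ∃ F : {x : K // ‖x‖ < 1} → {x : K // ‖x‖ < 1},
      Function.Bijective F ∧
      (∀ x : {x : K // ‖x‖ < 1},
        HasSum (fun k => a k * (x : K) ^ (k + 1)) (F x : K)) ∧
      ∀ x y : {x : K // ‖x‖ < 1}, ‖(F x : K) - (F y : K)‖ = ‖(x : K) - (y : K)‖ := by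
  have hiso {x y : K} (hx : ‖x‖ < 1) (hy : ‖y‖ < 1) :
      ‖seriesMulX a x - seriesMulX a y‖ = ‖x - y‖ :=
    norm_seriesMulX_sub ha0 ha hx hy
  have hmaps {x : K} (hx : ‖x‖ < 1) : ‖seriesMulX a x‖ < 1 := by
    have h0 := hiso hx (norm_zero.trans_lt one_pos)
    rw [seriesMulX_zero, sub_zero, sub_zero] at h0
    rwa [h0]
  let F : {x : K // ‖x‖ < 1} → {x : K // ‖x‖ < 1} := fun x => ⟨seriesMulX a x, hmaps x.2⟩
  have hF : Isometry F := Isometry.of_dist_eq fun x y => by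
    simpa [Subtype.dist_eq, dist_eq_norm] using hiso x.2 y.2
  refine ⟨F, ⟨hF.injective, fun b => ?_⟩, fun x => hasSum_seriesMulX ha x.2,
    fun x y => hiso x.2 y.2⟩
  obtain ⟨x, hxb, hx⟩ := exists_eq_of_norm_sub_sub_mul_le ha0 (seriesMulX_zero a)
    (fun x y hx hy => norm_seriesMulX_sub_sub_le ha hx hy) b.2
  exact ⟨⟨x, hxb.trans_lt b.2⟩, Subtype.ext hx⟩
end
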